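/- arXiv:1208.3638 — 3 statements merged into one kernel-verified Lean document; each statement's English description precedes it below -/
import Mathlib

section
/- Let F ⊆ S_n be a t-cycle-intersecting family that is fixed. Then for any i, j ∈ [n] with i < j, the family C_{i,j}(F) is also t-cycle-intersecting. -/
open Equiv Finset
open scoped Classical

noncomputable section

/-- A common cycle of two permutations `σ` and `π`: a nonempty subset `B` invariant
under both, on which they agree, and on which `σ` acts as a single cycle. -/
def IsCommonCycle {n : ℕ} (σ π : Equiv.Perm (Fin n)) (B : Finset (Fin n)) : Prop :=
  B.Nonempty ∧ (∀ x ∈ B, σ x ∈ B) ∧ (∀ x ∈ B, π x ∈ B) ∧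
  (∀ x ∈ B, σ x = π x) ∧ (∀ x ∈ B, ∀ y ∈ B, σ.SameCycle x y)

/-- A family of permutations is `t`-cycle-intersecting if any two of its members
have at least `t` common cycles on pairwise disjoint subsets. -/
def TCycleIntersecting {n : ℕ} (t : ℕ) (F : Set (Equiv.Perm (Fin n))) : Prop :=
  ∀ σ ∈ F, ∀ π ∈ F, ∃ 𝒞 : Finset (Finset (Fin n)),
    t ≤ 𝒞.card ∧ (∀ B ∈ 𝒞, IsCommonCycle σ π B) ∧
    (𝒞 : Set (Finset (Fin n))).Pairwise fun A B => Disjoint A B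

/-- The `ij`-fixing of a permutation: if `σ i = j` then make `i` a fixed point and
send `σ⁻¹ i` to `j`, leaving everything else unchanged. -/
def ijFix {n : ℕ} (i j : Fin n) (σ : Equiv.Perm (Fin n)) : Equiv.Perm (Fin n) :=
  if σ i = j then σ * Equiv.swap i (σ⁻¹ i) else σ

/-- The `ij`-fixing operation on a family of permutations. -/
def fixFamOp {n : ℕ} (i j : Fin n) (A : Set (Equiv.Perm (Fin n))) :
    Set (Equiv.Perm (Fin n)) :=
  (fun σ => if ijFix i j σ ∈ A then σ else ijFix i j σ) '' A

/-- A family is fixed if it is closed under all `ij`-fixing operations. -/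
def IsFixedFam {n : ℕ} (A : Set (Equiv.Perm (Fin n))) : Prop :=
  ∀ i j : Fin n, i ≠ j → fixFamOp i j A = A

/-- The `(i,j)`-compression of a permutation: if `σ i ≠ i` and `σ j = j`, then
fix `i`, send `j` to `σ i` and `σ⁻¹ i` to `j`; otherwise leave `σ` unchanged. -/
def compPerm {n : ℕ} (i j : Fin n) (σ : Equiv.Perm (Fin n)) : Equiv.Perm (Fin n) :=
  if σ i ≠ i ∧ σ j = j then (Equiv.swap i (σ i) * Equiv.swap i j) * σ else σ

/-- The `(i,j)`-compression operation on a family of permutations. -/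
def compFam {n : ℕ} (i j : Fin n) (A : Set (Equiv.Perm (Fin n))) :
    Set (Equiv.Perm (Fin n)) :=
  (fun σ => if compPerm i j σ ∈ A then σ else compPerm i j σ) '' A

/-- A family is compressed if it is closed under all `(i,j)`-compressions. -/
def IsCompressedFam {n : ℕ} (A : Set (Equiv.Perm (Fin n))) : Prop :=
  ∀ i j : Fin n, i < j → compFam i j A = A

/-- `F` is the stabilizer of `t` points: there are `t` distinct points such that `F`
consists exactly of the permutations fixing all of them. -/
def IsTPointStabilizer {n : ℕ} (t : ℕ) (F : Set (Equiv.Perm (Fin n))) : Prop :=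
  ∃ a : Fin t ↪ Fin n, F = {σ | ∀ k, σ (a k) = a k}

/-- The set of fixed points of a permutation. -/
def fixSet {n : ℕ} (σ : Equiv.Perm (Fin n)) : Finset (Fin n) :=
  Finset.univ.filter fun x => σ x = x

/-- The up-permutation of a set `B`: all permutations fixing every element of `B`. -/
def UpSet {n : ℕ} (B : Finset (Fin n)) : Set (Equiv.Perm (Fin n)) :=
  {σ | ∀ x ∈ B, σ x = x}

/-- The up-permutation of a collection of sets. -/
def UpFam {n : ℕ} (g : Set (Finset (Fin n))) : Set (Equiv.Perm (Fin n)) :=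
  ⋃ B ∈ g, UpSet B

/-- `g` is a generating set for `F`: it contains no set of size `n-1` and
`Up(g) = F`. -/
def IsGenSet {n : ℕ} (g : Set (Finset (Fin n))) (F : Set (Equiv.Perm (Fin n))) : Prop :=
  (∀ B ∈ g, B.card ≠ n - 1) ∧ UpFam g = F

/-- `s⁺(B)`: the largest element of `B`, in the 1-based numbering of `[n] = {1,…,n}`
(so `s⁺(∅) = 0`). -/
def sPlus {n : ℕ} (B : Finset (Fin n)) : ℕ := B.sup fun x => (x : ℕ) + 1

/-- `s⁺(g) = max {s⁺(B) : B ∈ g}`. -/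
def sPlusFam {n : ℕ} (g : Set (Finset (Fin n))) : ℕ := sSup (sPlus '' g)

/-- `s_min(G(F)) = min {s⁺(g) : g a generating set of F}`. -/
def sMin {n : ℕ} (F : Set (Equiv.Perm (Fin n))) : ℕ :=
  sInf (sPlusFam '' {g | IsGenSet g F})

/-- `L(B)`: all sets obtained from `B` by left-shifting, i.e. sets of the same size
whose `i`-th smallest element is at most the `i`-th smallest element of `B`. -/
def LSet {n : ℕ} (B : Finset (Fin n)) : Set (Finset (Fin n)) :=
  {A | ∃ h : A.card = B.card, ∀ i : Fin B.card,
      A.orderEmbOfFin h i ≤ B.orderEmbOfFin rfl i}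

/-- `L(g) = ⋃_{B ∈ g} L(B)`. -/
def LFam {n : ℕ} (g : Set (Finset (Fin n))) : Set (Finset (Fin n)) :=
  ⋃ B ∈ g, LSet B

/-- `L_*(g)`: the minimal (under inclusion) elements of `L(g)`. -/
def Lstar {n : ℕ} (g : Set (Finset (Fin n))) : Set (Finset (Fin n)) :=
  {A | A ∈ LFam g ∧ ∀ A' ∈ LFam g, A' ⊆ A → A' = A}

/-- The interval `[m] = {1,…,m}` inside `Fin n` (1-based). -/
def Ival (n m : ℕ) : Finset (Fin n) := Finset.univ.filter fun x => (x : ℕ) < m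

/-- `D(E) = {σ : fix(σ) ∩ [s⁺(E)] = E}`. -/
def DSet {n : ℕ} (E : Finset (Fin n)) : Set (Equiv.Perm (Fin n)) :=
  {σ | fixSet σ ∩ Ival n (sPlus E) = E}

/-!
Write `τ = swap i j`. The compression of a permutation fixing `j` is its conjugate by `τ`, and
conjugation carries common cycles to common cycles; this settles every pair except a kept `σ`
against a compressed `π` with `π i ≠ i`, `π j = j` and `σ j ≠ j`. No common cycle with `σ` then
contains `j`. The compression `π'` of `π` differs from `π` only at `i`, `j`, `π⁻¹ i`, and from the
`ij`-fixing `π₀ ∈ F` of `π` at `(i, π i)` only at `j`, `π⁻¹ i`. If `i` and `π i` lie in different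
`σ`-cycles, no common cycle of `σ` and `π` meets `{i, π⁻¹ i}`; if they lie in the same one, no
common cycle of `σ` and `π₀` contains `π⁻¹ i`, since it would contain `i`, which `π₀` fixes. So
the `t` common cycles of `σ` with `π` or with `π₀` are common cycles of `σ` and `π'`.
-/

section CommonCycles

variable {n t : ℕ} {σ σ' π π' : Perm (Fin n)} {B : Finset (Fin n)}

namespace IsCommonCycle

lemma apply_mem_left (h : IsCommonCycle σ π B) {x : Fin n} (hx : x ∈ B) : σ x ∈ B :=
  h.2.1 x hx

lemma apply_mem_right (h : IsCommonCycle σ π B) {x : Fin n} (hx : x ∈ B) : π x ∈ B :=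
  h.2.2.1 x hx

lemma apply_eq (h : IsCommonCycle σ π B) {x : Fin n} (hx : x ∈ B) : σ x = π x :=
  h.2.2.2.1 x hx

lemma sameCycle (h : IsCommonCycle σ π B) {x y : Fin n} (hx : x ∈ B) (hy : y ∈ B) :
    σ.SameCycle x y :=
  h.2.2.2.2 x hx y hy

lemma mem_of_sameCycle (h : IsCommonCycle σ π B) {x y : Fin n} (hx : x ∈ B)
    (hxy : σ.SameCycle x y) : y ∈ B := by
  obtain ⟨k, -, rfl⟩ := hxy.exists_pow_eq'
  exact Set.MapsTo.perm_pow (fun _ => h.apply_mem_left) k hx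

lemma notMem_of_apply_ne (h : IsCommonCycle σ π B) {x : Fin n} (hx : σ x ≠ π x) : x ∉ B :=
  fun hxB => hx (h.apply_eq hxB)

lemma congr_right (h : IsCommonCycle σ π B) (hπ : ∀ x ∈ B, π x = π' x) :
    IsCommonCycle σ π' B :=
  ⟨h.1, fun _ => h.apply_mem_left, fun x hx => hπ x hx ▸ h.apply_mem_right hx,
    fun x hx => (h.apply_eq hx).trans (hπ x hx), fun _ hx _ hy => h.sameCycle hx hy⟩

lemma symm (h : IsCommonCycle σ π B) : IsCommonCycle π σ B := by
  refine ⟨h.1, fun _ => h.apply_mem_right, fun _ => h.apply_mem_left,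
    fun x hx => (h.apply_eq hx).symm, fun x hx y hy => ?_⟩
  obtain ⟨k, -, rfl⟩ := (h.sameCycle hx hy).exists_pow_eq'
  have hmem : ∀ m : ℕ, (σ ^ m) x ∈ B :=
    fun m => Set.MapsTo.perm_pow (fun _ => h.apply_mem_left) m hx
  induction k with
  | zero => exact Perm.SameCycle.refl π x
  | succ k ih =>
    rw [pow_succ', Perm.mul_apply, h.apply_eq (hmem k), Perm.sameCycle_apply_right]
    exact ih (hmem k)

lemma conj (h : IsCommonCycle σ π B) (τ : Perm (Fin n)) :
    IsCommonCycle (τ * σ * τ⁻¹) (τ * π * τ⁻¹) (B.image τ) := by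
  refine ⟨h.1.image τ, ?_, ?_, ?_, ?_⟩ <;> simp only [Finset.forall_mem_image]
  · intro x hx
    simpa using Finset.mem_image_of_mem τ (h.apply_mem_left hx)
  · intro x hx
    simpa using Finset.mem_image_of_mem τ (h.apply_mem_right hx)
  · intro x hx
    simp [h.apply_eq hx]
  · intro x hx y hy
    exact (h.sameCycle hx hy).conj

end IsCommonCycle

def HasCommonCycles (t : ℕ) (σ π : Perm (Fin n)) : Prop :=
  ∃ 𝒞 : Finset (Finset (Fin n)), t ≤ 𝒞.card ∧ (∀ B ∈ 𝒞, IsCommonCycle σ π B) ∧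
    (𝒞 : Set (Finset (Fin n))).Pairwise fun A B => Disjoint A B

lemma TCycleIntersecting.hasCommonCycles {F : Set (Perm (Fin n))}
    (hF : TCycleIntersecting t F) (hσ : σ ∈ F) (hπ : π ∈ F) : HasCommonCycles t σ π :=
  hF σ hσ π hπ

namespace HasCommonCycles

lemma mono (h : HasCommonCycles t σ π)
    (hB : ∀ B, IsCommonCycle σ π B → IsCommonCycle σ' π' B) : HasCommonCycles t σ' π' :=
  let ⟨𝒞, hcard, hcyc, hdisj⟩ := h
  ⟨𝒞, hcard, fun B hB' => hB B (hcyc B hB'), hdisj⟩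

lemma symm (h : HasCommonCycles t σ π) : HasCommonCycles t π σ :=
  h.mono fun _ => IsCommonCycle.symm

lemma conj (h : HasCommonCycles t σ π) (τ : Perm (Fin n)) :
    HasCommonCycles t (τ * σ * τ⁻¹) (τ * π * τ⁻¹) := by
  obtain ⟨𝒞, hcard, hcyc, hdisj⟩ := h
  have himage : Function.Injective (Finset.image τ) := Finset.image_injective τ.injective
  refine ⟨𝒞.image (Finset.image τ), by rwa [Finset.card_image_of_injective _ himage],
    ?_, ?_⟩
  · simp only [Finset.forall_mem_image]
    exact fun B hB => (hcyc B hB).conj τ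
  · rw [Finset.coe_image, himage.injOn.pairwise_image]
    exact hdisj.mono' fun A B hAB => (Finset.disjoint_image τ.injective).2 hAB

end HasCommonCycles

end CommonCycles

section Compression

variable {n : ℕ} {F : Set (Perm (Fin n))} {σ π : Perm (Fin n)} {i j : Fin n}

lemma IsFixedFam.ijFix_mem (hfix : IsFixedFam F) (hσ : σ ∈ F) (hij : i ≠ j) :
    ijFix i j σ ∈ F := by
  by_contra h
  have hmem : ijFix i j σ ∈ fixFamOp i j F := ⟨σ, hσ, if_neg h⟩
  exact h (hfix i j hij ▸ hmem)

lemma compPerm_eq_conj (hij : i ≠ j) (hσj : σ j = j) :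
    compPerm i j σ = swap i j * σ * swap i j := by
  have hconj : swap i j * σ * swap i j = swap i j * swap (σ i) j * σ := by
    rw [mul_assoc, mul_assoc, ← hσj, swap_apply_apply, inv_mul_cancel_right, hσj]
  rw [hconj, compPerm]
  split_ifs with h
  · have hσij : σ i ≠ j := fun h' => hij (σ.injective (h'.trans hσj.symm))
    rw [← swap_mul_swap_mul_swap hσij h.1, swap_comm j i, mul_swap_mul_self]
  · have hσi : σ i = i := by simpa [hσj] using h
    rw [hσi, swap_mul_self, one_mul]

lemma apply_ne_and_apply_eq_of_compPerm_ne (h : compPerm i j σ ≠ σ) :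
    σ i ≠ i ∧ σ j = j := by
  by_contra hσ
  exact h (if_neg hσ)

lemma compPerm_apply_left (hij : i ≠ j) (hσj : σ j = j) : compPerm i j σ i = i := by
  simp [compPerm_eq_conj hij hσj, hσj]

lemma compPerm_apply_of_ne (hij : i ≠ j) (hσj : σ j = j) {x : Fin n} (hxi : x ≠ i)
    (hxj : x ≠ j) (hσx : σ x ≠ i) : compPerm i j σ x = σ x := by
  have hσx' : σ x ≠ j := fun h => hxj (σ.injective (h.trans hσj.symm))
  simp [compPerm_eq_conj hij hσj, swap_apply_of_ne_of_ne hxi hxj,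
    swap_apply_of_ne_of_ne hσx hσx']

end Compression

section FixedFamily

variable {n t : ℕ} {F : Set (Perm (Fin n))} {σ π : Perm (Fin n)} {i j : Fin n}

lemma hasCommonCycles_compPerm_of_apply_right_ne (hF : TCycleIntersecting t F)
    (hfix : IsFixedFam F) (hσ : σ ∈ F) (hπ : π ∈ F) (hij : i ≠ j) (hπi : π i ≠ i)
    (hπj : π j = j) (hσj : σ j ≠ j) : HasCommonCycles t σ (compPerm i j π) := by
  by_cases hcyc : σ.SameCycle (π i) i
  · have hπ₀ : π * swap i (π⁻¹ i) ∈ F := by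
      simpa only [ijFix, if_pos] using hfix.ijFix_mem hπ (Ne.symm hπi)
    refine (hF.hasCommonCycles hσ hπ₀).mono fun B hB => hB.congr_right fun x hx => ?_
    have hπij : π⁻¹ i ≠ j := fun h => hij ((Perm.inv_eq_iff_eq.1 h).trans hπj)
    have hxj : x ≠ j := by
      rintro rfl
      refine hB.notMem_of_apply_ne ?_ hx
      rwa [Perm.mul_apply, swap_apply_of_ne_of_ne hij.symm hπij.symm, hπj]
    have hxπ : x ≠ π⁻¹ i := by
      rintro rfl
      have hπiB : π i ∈ B := by simpa using hB.apply_mem_right hx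
      have hσi : σ i = i := by
        simpa using hB.apply_eq (hB.mem_of_sameCycle hπiB hcyc)
      exact hπi (hcyc.eq_of_right hσi)
    by_cases hxi : x = i
    · subst hxi
      simp [compPerm_apply_left hij hπj]
    · rw [Perm.mul_apply, swap_apply_of_ne_of_ne hxi hxπ,
        compPerm_apply_of_ne hij hπj hxi hxj fun h => hxπ (by simp [← h])]
  · refine (hF.hasCommonCycles hσ hπ).mono fun B hB => hB.congr_right fun x hx => ?_
    have hiB : i ∉ B := fun hiB => hcyc (hB.sameCycle (hB.apply_mem_right hiB) hiB)
    have hxj : x ≠ j := by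
      rintro rfl
      exact hB.notMem_of_apply_ne (by rwa [hπj]) hx
    exact (compPerm_apply_of_ne hij hπj (ne_of_mem_of_not_mem hx hiB) hxj
      fun h => hiB (h ▸ hB.apply_mem_right hx)).symm

lemma hasCommonCycles_compPerm_of_mem_of_notMem (hF : TCycleIntersecting t F)
    (hfix : IsFixedFam F) (hσ : σ ∈ F) (hπ : π ∈ F) (hij : i ≠ j) (hcσ : compPerm i j σ ∈ F)
    (hcπ : compPerm i j π ∉ F) : HasCommonCycles t σ (compPerm i j π) := by
  obtain ⟨hπi, hπj⟩ := apply_ne_and_apply_eq_of_compPerm_ne (ne_of_mem_of_not_mem hπ hcπ).symm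
  by_cases hσj : σ j = j
  · rw [compPerm_eq_conj hij hσj] at hcσ
    simpa [compPerm_eq_conj hij hπj, mul_assoc] using
      (hF.hasCommonCycles hcσ hπ).conj (swap i j)
  · exact hasCommonCycles_compPerm_of_apply_right_ne hF hfix hσ hπ hij hπi hπj hσj

end FixedFamily

/-- The `(i,j)`-compression of a fixed `t`-cycle-intersecting family is again
`t`-cycle-intersecting. -/
theorem stmt5 {n t : ℕ} (F : Set (Equiv.Perm (Fin n)))
    (hF : TCycleIntersecting t F) (hfix : IsFixedFam F)
    (i j : Fin n) (hij : i < j) :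
    TCycleIntersecting t (compFam i j F) := by
  rintro _ ⟨σ, hσ, rfl⟩ _ ⟨π, hπ, rfl⟩
  dsimp only
  split_ifs with hcσ hcπ hcπ
  · exact hF.hasCommonCycles hσ hπ
  · exact hasCommonCycles_compPerm_of_mem_of_notMem hF hfix hσ hπ hij.ne hcσ hcπ
  · exact (hasCommonCycles_compPerm_of_mem_of_notMem hF hfix hπ hσ hij.ne hcπ hcσ).symm
  · obtain ⟨-, hσj⟩ := apply_ne_and_apply_eq_of_compPerm_ne (ne_of_mem_of_not_mem hσ hcσ).symm
    obtain ⟨-, hπj⟩ := apply_ne_and_apply_eq_of_compPerm_ne (ne_of_mem_of_not_mem hπ hcπ).symm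
    have h := (hF.hasCommonCycles hσ hπ).conj (swap i j)
    rwa [swap_inv, ← compPerm_eq_conj hij.ne hσj, ← compPerm_eq_conj hij.ne hπj] at h
end
end

section
/- Let F ⊆ S_n be a t-cycle-intersecting family that is maximal and fixed. Then for any i, j ∈ [n] with i < j, the family C_{i,j}(F) is a fixed family of permutations. -/
open Equiv Finset
open scoped Classical

noncomputable section

/-!
Since `F` is closed under `ij`-fixings, a point moved by `σ ∈ F` at which `σ` agrees with
`π ∈ F` can be made a fixed point of `σ` inside `F` without changing the common fixed points.
Once no such point is left, all common cycles of `σ` and `π` are common fixed points, so any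
two members of `F` share `t` fixed points. Hence a maximal `F` contains every permutation whose
fixed-point set contains that of a member. Compression preserves this upward closedness (on
fixed-point sets it trades `j` for `i`), and an upward closed family is fixed because an
`ij`-fixing only creates fixed points.
-/

/-- `fixFamOp i j` and `compFam i j` are, by definition, `replaceImage (ijFix i j)` and
`replaceImage (compPerm i j)`. -/
def replaceImage {α : Type*} (f : α → α) (A : Set α) : Set α :=
  (fun x => if f x ∈ A then x else f x) '' A

section replaceImage

variable {α : Type*} {f : α → α} {A : Set α}

theorem replaceImage_eq_self_iff : replaceImage f A = A ↔ ∀ x ∈ A, f x ∈ A := by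
  constructor
  · intro h x hx
    by_contra hfx
    have : (if f x ∈ A then x else f x) ∈ replaceImage f A := ⟨x, hx, rfl⟩
    rw [h, if_neg hfx] at this
    exact hfx this
  · intro h
    exact (Set.image_congr fun x hx => if_pos (h x hx)).trans (Set.image_id' A)

theorem mem_replaceImage_iff {y : α} :
    y ∈ replaceImage f A ↔ (y ∈ A ∧ f y ∈ A) ∨ (y ∉ A ∧ ∃ x ∈ A, f x = y) := by
  constructor
  · rintro ⟨x, hx, rfl⟩
    by_cases hfx : f x ∈ A
    · simp only [if_pos hfx]
      exact Or.inl ⟨hx, hfx⟩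
    · simp only [if_neg hfx]
      exact Or.inr ⟨hfx, x, hx, rfl⟩
  · rintro (⟨hy, hfy⟩ | ⟨hy, x, hx, rfl⟩)
    · exact ⟨y, hy, if_pos hfy⟩
    · exact ⟨x, hx, if_neg hy⟩

end replaceImage

section

variable {n : ℕ}

@[simp]
theorem mem_fixSet {σ : Perm (Fin n)} {x : Fin n} : x ∈ fixSet σ ↔ σ x = x := by
  simp [fixSet]

theorem isFixedFam_iff {A : Set (Perm (Fin n))} :
    IsFixedFam A ↔ ∀ k l : Fin n, k ≠ l → ∀ σ ∈ A, ijFix k l σ ∈ A :=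
  forall₂_congr fun _ _ => imp_congr_right fun _ => replaceImage_eq_self_iff

theorem ijFix_apply (k l : Fin n) (σ : Perm (Fin n)) (x : Fin n) :
    ijFix k l σ x = if σ k = l ∧ x = k then k else if σ k = l ∧ σ x = k then l else σ x := by
  unfold ijFix
  have hk : σ (σ⁻¹ k) = k := σ.apply_symm_apply k
  split_ifs <;> grind [Perm.mul_apply, Perm.inv_eq_iff_eq]

theorem fixSet_subset_fixSet_ijFix (k l : Fin n) (σ : Perm (Fin n)) :
    fixSet σ ⊆ fixSet (ijFix k l σ) := by
  intro x
  simp only [mem_fixSet, ijFix_apply]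
  grind

theorem IsCommonCycle.eq_singleton {σ π : Perm (Fin n)} {B : Finset (Fin n)} {x : Fin n}
    (hB : IsCommonCycle σ π B) (hx : x ∈ B) (hσx : σ x = x) : B = {x} :=
  eq_singleton_iff_unique_mem.mpr ⟨hx, fun y hy => ((hB.2.2.2.2 x hx y hy).eq_of_left hσx).symm⟩

theorem isCommonCycle_singleton {σ π : Perm (Fin n)} {x : Fin n} (hσx : σ x = x)
    (hπx : π x = x) : IsCommonCycle σ π {x} := by
  refine ⟨singleton_nonempty x, ?_, ?_, ?_, ?_⟩ <;> simp_all [Perm.SameCycle.refl]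

theorem card_le_card_fixSet_inter {σ π : Perm (Fin n)} {𝒞 : Finset (Finset (Fin n))}
    (h𝒞 : ∀ B ∈ 𝒞, IsCommonCycle σ π B) (hne : ∀ x, σ x ≠ x → σ x ≠ π x) :
    #𝒞 ≤ #(fixSet σ ∩ fixSet π) := by
  have hsub : 𝒞 ⊆ (fixSet σ ∩ fixSet π).image ({·}) := by
    intro B hB
    obtain ⟨⟨x, hx⟩, -, -, hagree, -⟩ := h𝒞 B hB
    have hσx : σ x = x := not_not.mp fun hmoved => hne x hmoved (hagree x hx)
    have hπx : π x = x := (hagree x hx).symm.trans hσx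
    exact mem_image.mpr ⟨x, by simp [hσx, hπx], ((h𝒞 B hB).eq_singleton hx hσx).symm⟩
  exact (card_le_card hsub).trans card_image_le

theorem tCycleIntersecting_of_le_card_fixSet_inter {t : ℕ} {A : Set (Perm (Fin n))}
    (h : ∀ σ ∈ A, ∀ π ∈ A, t ≤ #(fixSet σ ∩ fixSet π)) : TCycleIntersecting t A := by
  intro σ hσ π hπ
  refine ⟨(fixSet σ ∩ fixSet π).image ({·}), ?_, ?_, ?_⟩
  · rw [card_image_of_injective _ singleton_injective]
    exact h σ hσ π hπ
  · simp only [mem_image, mem_inter, mem_fixSet]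
    rintro _ ⟨x, ⟨hσx, hπx⟩, rfl⟩
    exact isCommonCycle_singleton hσx hπx
  · simp only [coe_image]
    rintro _ ⟨x, -, rfl⟩ _ ⟨y, -, rfl⟩ hxy
    exact disjoint_singleton.mpr fun h => hxy (h ▸ rfl)

theorem fixSet_ssubset_fixSet_ijFix {σ : Perm (Fin n)} {x : Fin n} (hx : σ x ≠ x) :
    fixSet σ ⊂ fixSet (ijFix x (σ x) σ) :=
  Finset.ssubset_iff_subset_ne.mpr ⟨fixSet_subset_fixSet_ijFix _ _ σ, fun h =>
    hx (mem_fixSet.mp (h ▸ mem_fixSet.mpr (by simp [ijFix_apply])))⟩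

theorem fixSet_ijFix_inter_fixSet {σ π : Perm (Fin n)} {x : Fin n} (hagree : σ x = π x) :
    fixSet (ijFix x (σ x) σ) ∩ fixSet π = fixSet σ ∩ fixSet π := by
  refine subset_antisymm ?_ (inter_subset_inter_right (fixSet_subset_fixSet_ijFix _ _ σ))
  intro w
  simp only [mem_inter, mem_fixSet, ijFix_apply]
  grind [π.injective.eq_iff]

theorem le_card_fixSet_inter {t : ℕ} {F : Set (Perm (Fin n))} (hF : TCycleIntersecting t F)
    (hcl : ∀ k l : Fin n, k ≠ l → ∀ σ ∈ F, ijFix k l σ ∈ F) {σ π : Perm (Fin n)}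
    (hσ : σ ∈ F) (hπ : π ∈ F) : t ≤ #(fixSet σ ∩ fixSet π) := by
  induction hm : #(fixSet σ)ᶜ using Nat.strong_induction_on generalizing σ with
  | _ m ih =>
  by_cases hne : ∀ x, σ x ≠ x → σ x ≠ π x
  · obtain ⟨𝒞, ht, h𝒞, -⟩ := hF σ hσ π hπ
    exact ht.trans (card_le_card_fixSet_inter h𝒞 hne)
  push Not at hne
  obtain ⟨x, hmoved, hagree⟩ := hne
  rw [← fixSet_ijFix_inter_fixSet hagree]
  refine ih _ ?_ (hcl x (σ x) (Ne.symm hmoved) σ hσ) rfl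
  exact hm ▸ card_lt_card (compl_ssubset_compl.mpr (fixSet_ssubset_fixSet_ijFix hmoved))

def IsFixUpwardClosed (A : Set (Perm (Fin n))) : Prop :=
  ∀ σ ∈ A, ∀ τ, fixSet σ ⊆ fixSet τ → τ ∈ A

theorem IsFixUpwardClosed.isFixedFam {A : Set (Perm (Fin n))} (hA : IsFixUpwardClosed A) :
    IsFixedFam A :=
  isFixedFam_iff.mpr fun k l _ σ hσ => hA σ hσ _ (fixSet_subset_fixSet_ijFix k l σ)

/-- Adding `τ` with `fixSet σ ⊆ fixSet τ` for a member `σ` keeps every pair with `t` common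
fixed points, so maximality forces `τ` into the family. -/
theorem isFixUpwardClosed_of_maximal {t : ℕ} {F : Set (Perm (Fin n))}
    (hF : TCycleIntersecting t F) (hmax : ∀ σ ∉ F, ¬ TCycleIntersecting t (insert σ F))
    (hfix : IsFixedFam F) : IsFixUpwardClosed F := by
  intro σ hσ τ hστ
  by_contra hτ
  have hbelow : ∀ α ∈ insert τ F, ∃ α' ∈ F, fixSet α' ⊆ fixSet α := by
    rintro α (rfl | hα)
    exacts [⟨σ, hσ, hστ⟩, ⟨α, hα, subset_rfl⟩]
  refine hmax τ hτ (tCycleIntersecting_of_le_card_fixSet_inter fun α hα β hβ => ?_)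
  obtain ⟨α', hα', hαα'⟩ := hbelow α hα
  obtain ⟨β', hβ', hββ'⟩ := hbelow β hβ
  calc t ≤ #(fixSet α' ∩ fixSet β') := le_card_fixSet_inter hF (isFixedFam_iff.mp hfix) hα' hβ'
    _ ≤ #(fixSet α ∩ fixSet β) := card_le_card (inter_subset_inter hαα' hββ')

theorem compPerm_of_not {i j : Fin n} {σ : Perm (Fin n)} (hσ : ¬(σ i ≠ i ∧ σ j = j)) :
    compPerm i j σ = σ :=
  if_neg hσ

theorem fixSet_compPerm {i j : Fin n} (hij : i ≠ j) {σ : Perm (Fin n)}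
    (hσ : σ i ≠ i ∧ σ j = j) : fixSet (compPerm i j σ) = insert i ((fixSet σ).erase j) := by
  ext w
  simp only [compPerm, if_pos hσ, mem_fixSet, mem_insert, mem_erase, Perm.mul_apply]
  grind [σ.injective.eq_iff]

theorem fixSet_compPerm_mono {i j : Fin n} (hij : i ≠ j) {σ τ : Perm (Fin n)}
    (hστ : fixSet σ ⊆ fixSet τ) : fixSet (compPerm i j σ) ⊆ fixSet (compPerm i j τ) := by
  by_cases hσ : σ i ≠ i ∧ σ j = j <;> by_cases hτ : τ i ≠ i ∧ τ j = j
  · rw [fixSet_compPerm hij hσ, fixSet_compPerm hij hτ]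
    exact insert_subset_insert _ (erase_subset_erase _ hστ)
  · have hτj : τ j = j := mem_fixSet.mp (hστ (mem_fixSet.mpr hσ.2))
    have hτi : τ i = i := by tauto
    rw [fixSet_compPerm hij hσ, compPerm_of_not hτ]
    exact insert_subset (mem_fixSet.mpr hτi) ((erase_subset _ _).trans hστ)
  · rw [compPerm_of_not hσ, fixSet_compPerm hij hτ]
    intro w hw
    have hwj : w ≠ j := by
      rintro rfl
      have hσi : σ i = i := by simp_all
      exact hτ.1 (mem_fixSet.mp (hστ (mem_fixSet.mpr hσi)))
    exact mem_insert_of_mem (mem_erase.mpr ⟨hwj, hστ hw⟩)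
  · rwa [compPerm_of_not hσ, compPerm_of_not hτ]

theorem exists_compPerm_eq {i j : Fin n} (hij : i ≠ j) {τ : Perm (Fin n)} (hτi : τ i = i)
    (hτj : τ j ≠ j) :
    ∃ π, compPerm i j π = τ ∧ fixSet π = insert j ((fixSet τ).erase i) := by
  refine ⟨swap i j * τ * swap i j, ?_, ?_⟩
  · have hact : (swap i j * τ * swap i j) i ≠ i ∧ (swap i j * τ * swap i j) j = j := by
      simp only [Perm.mul_apply, swap_apply_left, swap_apply_right, hτi]
      grind [τ.injective.eq_iff]
    rw [compPerm, if_pos hact]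
    ext w
    simp only [Perm.mul_apply]
    grind [τ.injective.eq_iff]
  · ext w
    simp only [mem_fixSet, mem_insert, mem_erase, Perm.mul_apply]
    grind [τ.injective.eq_iff]

theorem isFixUpwardClosed_compFam {i j : Fin n} (hij : i ≠ j) {A : Set (Perm (Fin n))}
    (hA : IsFixUpwardClosed A) : IsFixUpwardClosed (compFam i j A) := by
  intro ρ hρ τ hρτ
  rw [show compFam i j A = replaceImage (compPerm i j) A from rfl, mem_replaceImage_iff] at hρ ⊢
  rcases hρ with ⟨hρA, hcρ⟩ | ⟨hρA, π, hπA, rfl⟩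
  · exact Or.inl ⟨hA ρ hρA τ hρτ, hA _ hcρ _ (fixSet_compPerm_mono hij hρτ)⟩
  have hπ : π i ≠ i ∧ π j = j := by
    by_contra h
    rw [compPerm_of_not h] at hρA
    exact hρA hπA
  rw [fixSet_compPerm hij hπ] at hρτ
  have hτi : τ i = i := mem_fixSet.mp (hρτ (mem_insert_self _ _))
  have hπτ : fixSet π ⊆ insert j ((fixSet τ).erase i) := by
    intro w hw
    have hwi : w ≠ i := by
      rintro rfl
      exact hπ.1 (mem_fixSet.mp hw)
    by_cases hwj : w = j
    · exact hwj ▸ mem_insert_self _ _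
    have hτw : w ∈ fixSet τ := hρτ (mem_insert_of_mem (mem_erase.mpr ⟨hwj, hw⟩))
    exact mem_insert_of_mem (mem_erase.mpr ⟨hwi, hτw⟩)
  by_cases hτA : τ ∈ A
  · exact Or.inl ⟨hτA, (compPerm_of_not fun h => h.1 hτi).symm ▸ hτA⟩
  by_cases hτj : τ j = j
  · exact absurd (hA π hπA τ (hπτ.trans (insert_subset (mem_fixSet.mpr hτj) (erase_subset _ _))))
      hτA
  obtain ⟨π', hπ', hfix'⟩ := exists_compPerm_eq hij hτi hτj
  exact Or.inr ⟨hτA, π', hA π hπA π' (hfix' ▸ hπτ), hπ'⟩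

end

/-- The `(i,j)`-compression of a maximal fixed `t`-cycle-intersecting family is a
fixed family. -/
theorem stmt6 {n t : ℕ} (F : Set (Equiv.Perm (Fin n)))
    (hF : TCycleIntersecting t F)
    (hmax : ∀ σ ∉ F, ¬ TCycleIntersecting t (insert σ F))
    (hfix : IsFixedFam F) (i j : Fin n) (hij : i < j) :
    IsFixedFam (compFam i j F) :=
  (isFixUpwardClosed_compFam hij.ne (isFixUpwardClosed_of_maximal hF hmax hfix)).isFixedFam
end
end

section
/- Let F ⊆ S_n be a t-cycle-intersecting family that is maximal, fixed and compressed, and let g be a generating set in G_*(F). For E ∈ g define D(E) = {σ ∈ S_n : fix(σ) ∩ [s⁺(E)] = E}. Then F is the disjoint union over E ∈ g of the sets D(E); that is, F = ∪_{E∈g} D(E) and D(E_1) ∩ D(E_2) = ∅ for distinct E_1, E_2 ∈ g. -/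
open Equiv Finset
open scoped Classical

noncomputable section

/-!
Within `[s⁺(E)]`, membership of `σ` in `D(E)` pins down `E` as the fixed points of `σ`, so two
members of `g` sharing a permutation are nested, and `L_*(g) = g` (no member of `g` contains
another element of `L(g)`) makes them equal. Conversely, for `σ ∈ Up(g)` choose `C ∈ g` fixed by
`σ` with `s⁺(C)` least. A fixed point `x ∉ C` below `s⁺(C)` could replace the largest element of
`C`, giving a left shift of `C` fixed by `σ` with smaller `s⁺`; a minimal element of `L(g)` below
it lies in `g`, contradicting the choice of `C`. Hence `σ ∈ D(C)`.
-/

namespace Finset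

variable {α : Type*} [LinearOrder α] {k : ℕ}

theorem orderEmbOfFin_le_of_lt_card_filter_le (s : Finset α) (h : s.card = k) (i : Fin k)
    {y : α} (hi : (i : ℕ) < #(s.filter (· ≤ y))) : s.orderEmbOfFin h i ≤ y := by
  by_contra! hlt
  have hsub : s.filter (· ≤ y) ⊆ (Iio i).image (s.orderEmbOfFin h) := by
    intro a ha
    obtain ⟨has, hay⟩ := mem_filter.mp ha
    obtain ⟨j, rfl⟩ : a ∈ Set.range (s.orderEmbOfFin h) := by rwa [range_orderEmbOfFin]
    exact mem_image_of_mem _ (mem_Iio.mpr ((s.orderEmbOfFin h).lt_iff_lt.mp (hay.trans_lt hlt)))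
  have := (card_le_card hsub).trans card_image_le
  rw [Fin.card_Iio] at this
  omega

theorem lt_card_filter_le_orderEmbOfFin (s : Finset α) (h : s.card = k) (i : Fin k) :
    (i : ℕ) < #(s.filter (· ≤ s.orderEmbOfFin h i)) := by
  have hsub : (Iic i).image (s.orderEmbOfFin h) ⊆ s.filter (· ≤ s.orderEmbOfFin h i) := by
    intro a ha
    obtain ⟨j, hj, rfl⟩ := mem_image.mp ha
    exact mem_filter.mpr ⟨orderEmbOfFin_mem s h j, (s.orderEmbOfFin h).monotone (mem_Iic.mp hj)⟩
  have := card_le_card hsub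
  rw [card_image_of_injective _ (s.orderEmbOfFin h).injective, Fin.card_Iic] at this
  omega

theorem orderEmbOfFin_le_of_injOn {s t : Finset α} (hst : s.card = t.card) {ψ : α → α}
    (hmaps : Set.MapsTo ψ t s) (hinj : Set.InjOn ψ t) (hle : ∀ b ∈ t, ψ b ≤ b)
    (i : Fin t.card) : s.orderEmbOfFin hst i ≤ t.orderEmbOfFin rfl i := by
  apply orderEmbOfFin_le_of_lt_card_filter_le
  refine (lt_card_filter_le_orderEmbOfFin t rfl i).trans_le (card_le_card_of_injOn ψ ?_ ?_)
  · intro b hb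
    obtain ⟨hbt, hby⟩ := mem_filter.mp hb
    exact mem_filter.mpr ⟨hmaps hbt, (hle b hbt).trans hby⟩
  · exact hinj.mono fun b hb => (mem_filter.mp hb).1

end Finset

section

variable {n : ℕ}

theorem mem_UpSet_iff_subset_fixSet {B : Finset (Fin n)} {σ : Perm (Fin n)} :
    σ ∈ UpSet B ↔ B ⊆ fixSet σ := by
  simp [UpSet, fixSet, subset_iff]

theorem mem_Ival {m : ℕ} {x : Fin n} : x ∈ Ival n m ↔ (x : ℕ) < m := by
  simp [Ival]

theorem Ival_mono {m m' : ℕ} (h : m ≤ m') : Ival n m ⊆ Ival n m' := fun _ hx =>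
  mem_Ival.mpr ((mem_Ival.mp hx).trans_le h)

theorem lt_sPlus_of_mem {B : Finset (Fin n)} {x : Fin n} (hx : x ∈ B) : (x : ℕ) < sPlus B :=
  Finset.le_sup (f := fun x : Fin n => (x : ℕ) + 1) hx

theorem sPlus_mono {A B : Finset (Fin n)} (h : A ⊆ B) : sPlus A ≤ sPlus B :=
  Finset.sup_mono h

theorem subset_Ival_sPlus (B : Finset (Fin n)) : B ⊆ Ival n (sPlus B) := fun _ hx =>
  mem_Ival.mpr (lt_sPlus_of_mem hx)

theorem subset_of_inter_Ival_sPlus_eq {X E : Finset (Fin n)} (hE : X ∩ Ival n (sPlus E) = E) :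
    E ⊆ X := by
  rw [← hE]
  exact inter_subset_left

theorem inter_Ival_sPlus_eq_iff {X E : Finset (Fin n)} :
    X ∩ Ival n (sPlus E) = E ↔ E ⊆ X ∧ ∀ x ∈ X, (x : ℕ) < sPlus E → x ∈ E := by
  refine ⟨fun hE => ⟨subset_of_inter_Ival_sPlus_eq hE, fun x hxX hx => ?_⟩, fun ⟨hEX, hX⟩ => ?_⟩
  · rw [← hE]
    exact mem_inter.mpr ⟨hxX, mem_Ival.mpr hx⟩
  · refine Subset.antisymm (fun x hx => ?_) (subset_inter hEX (subset_Ival_sPlus E))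
    obtain ⟨hxX, hxI⟩ := mem_inter.mp hx
    exact hX x hxX (mem_Ival.mp hxI)

theorem self_mem_LSet (B : Finset (Fin n)) : B ∈ LSet B :=
  ⟨rfl, fun _ => le_rfl⟩

theorem insert_erase_mem_LSet {C : Finset (Fin n)} {b x : Fin n} (hb : b ∈ C) (hx : x ∉ C)
    (hxb : x ≤ b) : insert x (C.erase b) ∈ LSet C := by
  have hcard : (insert x (C.erase b)).card = C.card := by
    rw [card_insert_of_notMem fun h => hx (mem_of_mem_erase h), card_erase_add_one hb]
  refine ⟨hcard, orderEmbOfFin_le_of_injOn hcard (ψ := swap x b) (fun a ha => ?_)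
    (swap x b).injective.injOn (fun a ha => ?_)⟩
  · by_cases hab : a = b
    · simp [hab]
    · rw [swap_apply_of_ne_of_ne (ne_of_mem_of_not_mem ha hx) hab]
      exact mem_insert_of_mem (mem_erase.mpr ⟨hab, ha⟩)
  · by_cases hab : a = b
    · simpa [hab] using hxb
    · rw [swap_apply_of_ne_of_ne (ne_of_mem_of_not_mem ha hx) hab]

theorem exists_sPlus_insert_erase_lt {C : Finset (Fin n)} {x : Fin n} (hx : x ∉ C)
    (hxC : (x : ℕ) < sPlus C) : ∃ b ∈ C, x ≤ b ∧ sPlus (insert x (C.erase b)) < sPlus C := by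
  have hne : C.Nonempty := nonempty_iff_ne_empty.mpr fun h => by simp [h, sPlus] at hxC
  obtain ⟨b, hbC, hb⟩ := exists_mem_eq_sup C hne fun x : Fin n => (x : ℕ) + 1
  have hsPlus : sPlus C = b + 1 := hb
  have hmax : ∀ a ∈ C, a ≤ b := fun a ha => Fin.le_def.mpr (by
    have := lt_sPlus_of_mem ha
    omega)
  have hxb : x < b :=
    lt_of_le_of_ne (Fin.le_def.mpr (by omega)) (ne_of_mem_of_not_mem hbC hx).symm
  refine ⟨b, hbC, hxb.le, ?_⟩
  rw [hsPlus, Nat.lt_succ_iff]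
  refine Finset.sup_le fun a ha => ?_
  rcases mem_insert.mp ha with rfl | ha
  · exact hxb
  · exact lt_of_le_of_ne (hmax a (mem_of_mem_erase ha)) (ne_of_mem_erase ha)

variable {g : Set (Finset (Fin n))}

theorem mem_LFam_of_mem {E : Finset (Fin n)} (hE : E ∈ g) : E ∈ LFam g :=
  Set.mem_biUnion hE (self_mem_LSet E)

theorem exists_mem_Lstar_subset {A : Finset (Fin n)} (hA : A ∈ LFam g) :
    ∃ E ∈ Lstar g, E ⊆ A := by
  obtain ⟨E, hEA, hEL, hEmin⟩ := exists_minimal_le_of_wellFoundedLT (· ∈ LFam g) A hA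
  exact ⟨E, ⟨hEL, fun A' hA' hA'E => hA'E.antisymm (hEmin hA' hA'E)⟩, hEA⟩

theorem eq_of_inter_Ival_sPlus_eq (hstar : Lstar g = g) {X E₁ E₂ : Finset (Fin n)}
    (h₁ : E₁ ∈ g) (h₂ : E₂ ∈ g) (hX₁ : X ∩ Ival n (sPlus E₁) = E₁)
    (hX₂ : X ∩ Ival n (sPlus E₂) = E₂) : E₁ = E₂ := by
  wlog hle : sPlus E₁ ≤ sPlus E₂ generalizing E₁ E₂
  · exact (this h₂ h₁ hX₂ hX₁ (le_of_not_ge hle)).symm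
  have hsub : E₁ ⊆ E₂ := by
    rw [← hX₁, ← hX₂]
    exact inter_subset_inter_left (Ival_mono hle)
  rw [← hstar] at h₂
  exact h₂.2 E₁ (mem_LFam_of_mem h₁) hsub

theorem exists_inter_Ival_sPlus_eq (hstar : Lstar g = g) {X : Finset (Fin n)}
    (hX : ∃ B ∈ g, B ⊆ X) : ∃ E ∈ g, X ∩ Ival n (sPlus E) = E := by
  obtain ⟨C, ⟨hCg, hCX⟩, hCmin⟩ :=
    Set.exists_min_image {B | B ∈ g ∧ B ⊆ X} sPlus (Set.toFinite _) hX
  refine ⟨C, hCg, inter_Ival_sPlus_eq_iff.mpr ⟨hCX, fun x hxX hxC => ?_⟩⟩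
  by_contra hx
  obtain ⟨b, hbC, hxb, hlt⟩ := exists_sPlus_insert_erase_lt hx hxC
  obtain ⟨E, hE, hEsub⟩ :=
    exists_mem_Lstar_subset (Set.mem_biUnion hCg (insert_erase_mem_LSet hbC hx hxb))
  have hEX : E ⊆ X := hEsub.trans (insert_subset hxX ((erase_subset b C).trans hCX))
  rw [hstar] at hE
  exact (hCmin E ⟨hE, hEX⟩).not_gt ((sPlus_mono hEsub).trans_lt hlt)

end

theorem stmt14_general {n : ℕ} (F : Set (Equiv.Perm (Fin n)))
    (g : Set (Finset (Fin n))) (hg : IsGenSet g F) (hstar : Lstar g = g) :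
    F = (⋃ E ∈ g, DSet E) ∧
      ∀ E₁ ∈ g, ∀ E₂ ∈ g, E₁ ≠ E₂ → DSet E₁ ∩ DSet E₂ = (∅ : Set (Equiv.Perm (Fin n))) := by
  refine ⟨?_, fun E₁ h₁ E₂ h₂ hne => ?_⟩
  · rw [← hg.2]
    ext σ
    simp only [UpFam, Set.mem_iUnion, mem_UpSet_iff_subset_fixSet, exists_prop]
    constructor
    · rintro ⟨B, hB, hBσ⟩
      exact exists_inter_Ival_sPlus_eq hstar ⟨B, hB, hBσ⟩
    · rintro ⟨E, hE, hσE⟩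
      exact ⟨E, hE, subset_of_inter_Ival_sPlus_eq hσE⟩
  · exact Set.eq_empty_iff_forall_notMem.mpr fun σ ⟨hσ₁, hσ₂⟩ =>
      hne (eq_of_inter_Ival_sPlus_eq hstar h₁ h₂ hσ₁ hσ₂)

/-- For a maximal, fixed and compressed `t`-cycle-intersecting family `F` and a
generating set `g ∈ G_*(F)`, `F` is the disjoint union over `E ∈ g` of the sets
`D(E) = {σ : fix(σ) ∩ [s⁺(E)] = E}`. -/
theorem stmt14 {n t : ℕ} (F : Set (Equiv.Perm (Fin n)))
    (hF : TCycleIntersecting t F)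
    (hmax : ∀ σ ∉ F, ¬ TCycleIntersecting t (insert σ F))
    (hfix : IsFixedFam F) (hcomp : IsCompressedFam F)
    (g : Set (Finset (Fin n))) (hg : IsGenSet g F) (hstar : Lstar g = g) :
    F = (⋃ E ∈ g, DSet E) ∧
      ∀ E₁ ∈ g, ∀ E₂ ∈ g, E₁ ≠ E₂ → DSet E₁ ∩ DSet E₂ = (∅ : Set (Equiv.Perm (Fin n))) :=
  stmt14_general F g hg hstar
end
end
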